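/- For every real ℓ > 0, F(ℓ, coth(ℓ/2), coth(ℓ/2)) = 0, where coth t = cosh t / sinh t; that is, F vanishes at x = y = coth(ℓ/2). -/

import Mathlib

open Real

/-- The real inverse hyperbolic tangent. -/
noncomputable def arctanh (x : ℝ) : ℝ := Real.log ((1 + x) / (1 - x)) / 2

/-- The function `F` of Kloeckner–Kuperberg, Lemma 7.4. -/
noncomputable def F (ℓ x y : ℝ) : ℝ :=
  Real.sinh ℓ ^ 3 * (x * y) - (Real.cosh ℓ ^ 3 - 3 * Real.cosh ℓ + 2) * (x + y)
    + Real.sinh ℓ ^ 3 - 6 * Real.sinh ℓ - 6 * ℓ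
    + 6 * arctanh (1 / x) + 2 * x / (x ^ 2 - 1)
    + 6 * arctanh (1 / y) + 2 * y / (y ^ 2 - 1)

/-- `coth t = cosh t / sinh t`. -/
noncomputable def coth (t : ℝ) : ℝ := Real.cosh t / Real.sinh t

theorem stmt3 (ℓ : ℝ) (hℓ : 0 < ℓ) :
    F ℓ (coth (ℓ / 2)) (coth (ℓ / 2)) = 0 := by
  set t := ℓ / 2 with ht
  have hs : 0 < Real.sinh t := Real.sinh_pos_iff.2 (by simp [ht]; linarith)
  have hc : 0 < Real.cosh t := Real.cosh_pos t
  have hid : Real.cosh t ^ 2 - Real.sinh t ^ 2 = 1 := Real.cosh_sq_sub_sinh_sq t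
  have hsl : Real.sinh ℓ = 2 * Real.sinh t * Real.cosh t := by
    rw [show ℓ = t + t by rw [ht]; ring, Real.sinh_add]; ring
  have hcl : Real.cosh ℓ = Real.cosh t ^ 2 + Real.sinh t ^ 2 := by
    rw [show ℓ = t + t by rw [ht]; ring, Real.cosh_add]; ring
  have harc : arctanh (1 / coth t) = t := by
    unfold arctanh coth
    rw [one_div_div]
    have h1 : (1 + Real.sinh t / Real.cosh t) / (1 - Real.sinh t / Real.cosh t)
        = Real.exp t / Real.exp (-t) := by
      rw [← Real.cosh_add_sinh, ← Real.cosh_sub_sinh]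
      field_simp
    rw [h1, ← Real.exp_sub, Real.log_exp]; ring
  have hden : coth t ^ 2 - 1 = 1 / Real.sinh t ^ 2 := by
    unfold coth
    field_simp
    exact hid
  unfold F
  rw [harc, hden]
  unfold coth
  have hℓt : ℓ = 2 * t := by rw [ht]; ring
  rw [hsl, hcl, hℓt]
  have hs' : Real.sinh t ≠ 0 := ne_of_gt hs
  field_simp
  linear_combination (Real.sinh t ^ 4 *
    (-2 * Real.cosh t ^ 5 - 2 * Real.cosh t ^ 3 +
      (2 * Real.sinh t ^ 4 - 2 * Real.sinh t ^ 2 + 4) * Real.cosh t) + (2 * Real.sinh t ^ 4 - 2) * Real.cosh t ^ 5 + (2 * Real.sinh t ^ 4 - 2) * Real.cosh t ^ 3 +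
      (4 - 2 * Real.sinh t ^ 2 - 2 * Real.sinh t ^ 4 + 2 * Real.sinh t ^ 6 - 2 * Real.sinh t ^ 8) * Real.cosh t) * hid
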